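/- Let α ∈ (0,2), let w̃^k be the output of the parallel splitting ALM step with input ξ^k, and let ξ^{k+1} = ξ^k − αℳ(ξ^k − ξ̃^k). Then ‖ξ^k − ξ^{k+1}‖²_ℋ = α²‖ξ^k − ξ̃^k‖²_𝒟, and consequently for every ξ* ∈ Ξ*: ‖ξ^{k+1} − ξ*‖²_ℋ ≤ ‖ξ^k − ξ*‖²_ℋ − ((2 − α)/α)‖ξ^k − ξ^{k+1}‖²_ℋ. -/

import Mathlib

open Matrix
open scoped Kronecker

noncomputable section

/-- `Q₀ = [β I_p, e_p; −e_pᵀ, 1/β]`. -/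
def Q0 (p : ℕ) (β : ℝ) : Matrix (Fin p ⊕ Unit) (Fin p ⊕ Unit) ℝ :=
  Matrix.fromBlocks (β • (1 : Matrix (Fin p) (Fin p) ℝ))
    (Matrix.of fun _ _ => (1 : ℝ))
    (Matrix.of fun _ _ => (-1 : ℝ))
    (Matrix.of fun _ _ => 1 / β)

/-- `D₀ = diag(β, …, β, 1/β)`. -/
def D0 (p : ℕ) (β : ℝ) : Matrix (Fin p ⊕ Unit) (Fin p ⊕ Unit) ℝ :=
  Matrix.fromBlocks (β • (1 : Matrix (Fin p) (Fin p) ℝ)) 0 0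
    (Matrix.of fun _ _ => 1 / β)

/-- `M₀ = I_{p+1} − (1/(p+1))·[e_p e_pᵀ, −(1/β)e_p; β e_pᵀ, p]`. -/
def M0 (p : ℕ) (β : ℝ) : Matrix (Fin p ⊕ Unit) (Fin p ⊕ Unit) ℝ :=
  1 - (1 / (p + 1 : ℝ)) •
    Matrix.fromBlocks (Matrix.of fun _ _ => (1 : ℝ))
      (Matrix.of fun _ _ => -(1 / β))
      (Matrix.of fun _ _ => (β : ℝ))
      (Matrix.of fun _ _ => (p : ℝ))

/-- `H₀ = [β(I_p + e_p e_pᵀ), 0; 0, (p+1)/β]`. -/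
def H0 (p : ℕ) (β : ℝ) : Matrix (Fin p ⊕ Unit) (Fin p ⊕ Unit) ℝ :=
  Matrix.fromBlocks (β • ((1 : Matrix (Fin p) (Fin p) ℝ) + Matrix.of fun _ _ => (1 : ℝ))) 0 0
    (Matrix.of fun _ _ => (p + 1 : ℝ) / β)

/-- `𝒬 = Q₀ ⊗ I_m`. -/
def calQ (p m : ℕ) (β : ℝ) : Matrix ((Fin p ⊕ Unit) × Fin m) ((Fin p ⊕ Unit) × Fin m) ℝ :=
  Q0 p β ⊗ₖ (1 : Matrix (Fin m) (Fin m) ℝ)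

/-- `𝒟 = D₀ ⊗ I_m`. -/
def calD (p m : ℕ) (β : ℝ) : Matrix ((Fin p ⊕ Unit) × Fin m) ((Fin p ⊕ Unit) × Fin m) ℝ :=
  D0 p β ⊗ₖ (1 : Matrix (Fin m) (Fin m) ℝ)

/-- `ℳ = M₀ ⊗ I_m`. -/
def calM (p m : ℕ) (β : ℝ) : Matrix ((Fin p ⊕ Unit) × Fin m) ((Fin p ⊕ Unit) × Fin m) ℝ :=
  M0 p β ⊗ₖ (1 : Matrix (Fin m) (Fin m) ℝ)

/-- `ℋ = H₀ ⊗ I_m`. -/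
def calH (p m : ℕ) (β : ℝ) : Matrix ((Fin p ⊕ Unit) × Fin m) ((Fin p ⊕ Unit) × Fin m) ℝ :=
  H0 p β ⊗ₖ (1 : Matrix (Fin m) (Fin m) ℝ)

/-- `‖v‖²_G = vᵀ G v`. -/
def nsq {p m : ℕ} (G : Matrix ((Fin p ⊕ Unit) × Fin m) ((Fin p ⊕ Unit) × Fin m) ℝ)
    (v : (Fin p ⊕ Unit) × Fin m → ℝ) : ℝ :=
  v ⬝ᵥ G.mulVec v

/-- `θ(x) = Σ_i θ_i(x_i)`. -/
def thetaSum {p : ℕ} {n : Fin p → ℕ} (θ : (i : Fin p) → (Fin (n i) → ℝ) → ℝ)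
    (x : (i : Fin p) → Fin (n i) → ℝ) : ℝ :=
  ∑ i, θ i (x i)

/-- The Euclidean inner product on `ℝ^{n_1}×⋯×ℝ^{n_p}×ℝ^m`. -/
def dotW {p m : ℕ} {n : Fin p → ℕ}
    (w w' : ((i : Fin p) → Fin (n i) → ℝ) × (Fin m → ℝ)) : ℝ :=
  (∑ i, w.1 i ⬝ᵥ w'.1 i) + w.2 ⬝ᵥ w'.2

/-- `F(w) = (−A_1ᵀλ, …, −A_pᵀλ, Σ_i A_i x_i − b)`. -/
def Fop {p m : ℕ} {n : Fin p → ℕ} (A : (i : Fin p) → Matrix (Fin m) (Fin (n i)) ℝ)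
    (b : Fin m → ℝ) (w : ((i : Fin p) → Fin (n i) → ℝ) × (Fin m → ℝ)) :
    ((i : Fin p) → Fin (n i) → ℝ) × (Fin m → ℝ) :=
  (fun i => -((A i)ᵀ.mulVec w.2), (∑ i, (A i).mulVec (w.1 i)) - b)

/-- `Pw = (A_1 x_1, …, A_p x_p, λ) ∈ ℝ^{(p+1)m}`. -/
def Pmap {p m : ℕ} {n : Fin p → ℕ} (A : (i : Fin p) → Matrix (Fin m) (Fin (n i)) ℝ)
    (w : ((i : Fin p) → Fin (n i) → ℝ) × (Fin m → ℝ)) :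
    (Fin p ⊕ Unit) × Fin m → ℝ :=
  fun q => Sum.elim (fun i => (A i).mulVec (w.1 i) q.2) (fun _ => w.2 q.2) q.1

/-- `Ω = 𝒳_1 × ⋯ × 𝒳_p × ℝ^m`. -/
def OmegaSet {p : ℕ} (m : ℕ) {n : Fin p → ℕ} (X : (i : Fin p) → Set (Fin (n i) → ℝ)) :
    Set (((i : Fin p) → Fin (n i) → ℝ) × (Fin m → ℝ)) :=
  {w | ∀ i, w.1 i ∈ X i}

/-- The solution set `Ω*` of the variational inequality VI(Ω,F,θ). -/
def VIsol {p m : ℕ} {n : Fin p → ℕ} (θ : (i : Fin p) → (Fin (n i) → ℝ) → ℝ)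
    (X : (i : Fin p) → Set (Fin (n i) → ℝ))
    (A : (i : Fin p) → Matrix (Fin m) (Fin (n i)) ℝ) (b : Fin m → ℝ) :
    Set (((i : Fin p) → Fin (n i) → ℝ) × (Fin m → ℝ)) :=
  {ws | ws ∈ OmegaSet m X ∧ ∀ w ∈ OmegaSet m X,
    thetaSum θ w.1 - thetaSum θ ws.1 + dotW (w - ws) (Fop A b ws) ≥ 0}

/-- The `λ`-component of `ξ = (u_1, …, u_p, λ)`. -/
def lamOf {p m : ℕ} (ξ : (Fin p ⊕ Unit) × Fin m → ℝ) : Fin m → ℝ :=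
  fun j => ξ (Sum.inr (), j)

/-- The `u_i`-component of `ξ = (u_1, …, u_p, λ)`. -/
def uOf {p m : ℕ} (ξ : (Fin p ⊕ Unit) × Fin m → ℝ) (i : Fin p) : Fin m → ℝ :=
  fun j => ξ (Sum.inl i, j)

/-- The parallel splitting ALM step: with input `ξ = (u_1, …, u_p, λ)` it produces
`w̃ = (x̃_1, …, x̃_p, λ̃)` where each `x̃_i ∈ 𝒳_i` minimizes
`x_i ↦ θ_i(x_i) − λᵀ A_i x_i + (β/2)‖A_i x_i − u_i‖²` over `𝒳_i`, and
`λ̃ = λ − β(Σ_i u_i − b)`. -/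
def ALMStep {p m : ℕ} {n : Fin p → ℕ} (β : ℝ) (θ : (i : Fin p) → (Fin (n i) → ℝ) → ℝ)
    (X : (i : Fin p) → Set (Fin (n i) → ℝ))
    (A : (i : Fin p) → Matrix (Fin m) (Fin (n i)) ℝ) (b : Fin m → ℝ)
    (ξ : (Fin p ⊕ Unit) × Fin m → ℝ)
    (wt : ((i : Fin p) → Fin (n i) → ℝ) × (Fin m → ℝ)) : Prop :=
  (∀ i, wt.1 i ∈ X i ∧ ∀ y ∈ X i,
      θ i (wt.1 i) - lamOf ξ ⬝ᵥ (A i).mulVec (wt.1 i) +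
          β / 2 * (((A i).mulVec (wt.1 i) - uOf ξ i) ⬝ᵥ ((A i).mulVec (wt.1 i) - uOf ξ i)) ≤
        θ i y - lamOf ξ ⬝ᵥ (A i).mulVec y +
          β / 2 * (((A i).mulVec y - uOf ξ i) ⬝ᵥ ((A i).mulVec y - uOf ξ i))) ∧
  wt.2 = lamOf ξ - β • ((∑ i, uOf ξ i) - b)

/-!
Write `d = ξ^k − ξ̃^k`. The block matrices satisfy `ℋℳ = 𝒬`, `ℳᵀ𝒬 = 𝒟` and `𝒬 + 𝒬ᵀ = 2𝒟`, so
`‖ℳd‖²_ℋ = ‖d‖²_𝒟 = dᵀ𝒬d`, which is the first claim. The first-order optimality conditions of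
the `p` subproblems, summed, give the prediction inequality
`θ(x) − θ(x̃) + (w − w̃)ᵀF(w̃) ≥ (Pw − ξ̃)ᵀ𝒬d` on `Ω`; taking `w = w*` and adding the
variational inequality at `w*` (the affine map `F` is skew, so the `F`-terms cancel) gives
`(ξ̃ − ξ*)ᵀ𝒬d ≥ 0`, i.e. `(ξ^k − ξ*)ᵀ𝒬d ≥ ‖d‖²_𝒟`. Expanding `‖(ξ^k − ξ*) − αℳd‖²_ℋ` with
`ℋℳ = 𝒬` then yields the contraction.
-/

section QuadraticForm

variable {ι κ R : Type*} [Fintype ι] [Fintype κ]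

lemma mulVec_dotProduct_mulVec [CommSemiring R] (M : Matrix ι κ R) (G : Matrix ι ι R)
    (v w : κ → R) : M *ᵥ v ⬝ᵥ G *ᵥ (M *ᵥ w) = v ⬝ᵥ (Mᵀ * G * M) *ᵥ w := by
  rw [← mulVec_mulVec, ← mulVec_mulVec, dotProduct_transpose_mulVec, dotProduct_comm]

lemma dotProduct_mulVec_sub_smul_self [CommRing R] {G : Matrix ι ι R} (hG : Gᵀ = G)
    (e w : ι → R) (a : R) :
    (e - a • w) ⬝ᵥ G *ᵥ (e - a • w) =
      e ⬝ᵥ G *ᵥ e - 2 * a * (e ⬝ᵥ G *ᵥ w) + a ^ 2 * (w ⬝ᵥ G *ᵥ w) := by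
  have hsymm : w ⬝ᵥ G *ᵥ e = e ⬝ᵥ G *ᵥ w := by
    rw [← dotProduct_transpose_mulVec, hG]
  simp only [mulVec_sub, mulVec_smul, sub_dotProduct, dotProduct_sub, smul_dotProduct,
    dotProduct_smul, smul_eq_mul, hsymm]
  ring

lemma dotProduct_mulVec_self_eq_of_add_transpose [Field R] [CharZero R] {Q D : Matrix ι ι R}
    (h : Q + Qᵀ = (2 : R) • D) (v : ι → R) : v ⬝ᵥ Q *ᵥ v = v ⬝ᵥ D *ᵥ v := by
  have h2 : v ⬝ᵥ (Q + Qᵀ) *ᵥ v = 2 * (v ⬝ᵥ Q *ᵥ v) := by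
    rw [add_mulVec, dotProduct_add, dotProduct_transpose_mulVec]; ring
  rw [h, smul_mulVec, dotProduct_smul, smul_eq_mul] at h2
  exact (mul_left_cancel₀ two_ne_zero h2).symm

end QuadraticForm

section BlockMatrices

variable {p m : ℕ} {β : ℝ}

lemma H0_mul_M0 (hβ : β ≠ 0) : H0 p β * M0 p β = Q0 p β := by
  have hp : (p : ℝ) + 1 ≠ 0 := by positivity
  ext (i | i) (j | j) <;>
    simp [H0, M0, Q0, Matrix.mul_apply, Fintype.sum_sum_type, Matrix.one_apply,
      Finset.sum_add_distrib, add_mul, mul_sub, Finset.sum_sub_distrib] <;>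
    (try split_ifs) <;> field_simp <;> ring

lemma M0_transpose_mul_Q0 (hβ : β ≠ 0) : (M0 p β)ᵀ * Q0 p β = D0 p β := by
  have hp : (p : ℝ) + 1 ≠ 0 := by positivity
  ext (i | i) (j | j) <;>
    simp [D0, M0, Q0, Matrix.mul_apply, Fintype.sum_sum_type, Matrix.one_apply,
      Finset.sum_sub_distrib] <;>
    (try split_ifs) <;> field_simp <;> ring

lemma H0_transpose : (H0 p β)ᵀ = H0 p β := by
  ext (i | i) (j | j) <;> simp [H0, Matrix.one_apply, eq_comm]

lemma Q0_add_transpose : Q0 p β + (Q0 p β)ᵀ = (2 : ℝ) • D0 p β := by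
  ext (i | i) (j | j) <;> simp [Q0, D0, Matrix.one_apply, eq_comm] <;> (try split_ifs) <;> ring

lemma calH_mul_calM (hβ : β ≠ 0) : calH p m β * calM p m β = calQ p m β := by
  rw [calH, calM, calQ, ← mul_kronecker_mul, one_mul, H0_mul_M0 hβ]

lemma calM_transpose_mul_calQ (hβ : β ≠ 0) : (calM p m β)ᵀ * calQ p m β = calD p m β := by
  rw [calM, calQ, calD, ← kroneckerMap_transpose, transpose_one, ← mul_kronecker_mul, one_mul,
    M0_transpose_mul_Q0 hβ]

lemma calH_transpose : (calH p m β)ᵀ = calH p m β := by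
  rw [calH, ← kroneckerMap_transpose, transpose_one, H0_transpose]

lemma calQ_add_transpose : calQ p m β + (calQ p m β)ᵀ = (2 : ℝ) • calD p m β := by
  rw [calQ, calD, ← kroneckerMap_transpose, transpose_one, ← add_kronecker, Q0_add_transpose,
    smul_kronecker]

lemma nsq_smul (G : Matrix ((Fin p ⊕ Unit) × Fin m) ((Fin p ⊕ Unit) × Fin m) ℝ) (a : ℝ)
    (v : (Fin p ⊕ Unit) × Fin m → ℝ) : nsq G (a • v) = a ^ 2 * nsq G v := by
  simp only [nsq, mulVec_smul, smul_dotProduct, dotProduct_smul, smul_eq_mul]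
  ring

lemma nsq_sub_smul {G : Matrix ((Fin p ⊕ Unit) × Fin m) ((Fin p ⊕ Unit) × Fin m) ℝ}
    (hG : Gᵀ = G) (e w : (Fin p ⊕ Unit) × Fin m → ℝ) (a : ℝ) :
    nsq G (e - a • w) = nsq G e - 2 * a * (e ⬝ᵥ G *ᵥ w) + a ^ 2 * nsq G w :=
  dotProduct_mulVec_sub_smul_self hG e w a

lemma nsq_calH_calM_mulVec (hβ : β ≠ 0) (v : (Fin p ⊕ Unit) × Fin m → ℝ) :
    nsq (calH p m β) (calM p m β *ᵥ v) = nsq (calD p m β) v := by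
  rw [nsq, nsq, mulVec_dotProduct_mulVec, Matrix.mul_assoc, calH_mul_calM hβ,
    calM_transpose_mul_calQ hβ]

lemma dotProduct_calH_calM_mulVec (hβ : β ≠ 0) (e v : (Fin p ⊕ Unit) × Fin m → ℝ) :
    e ⬝ᵥ calH p m β *ᵥ (calM p m β *ᵥ v) = e ⬝ᵥ calQ p m β *ᵥ v := by
  rw [mulVec_mulVec, calH_mul_calM hβ]

lemma dotProduct_calQ_self (v : (Fin p ⊕ Unit) × Fin m → ℝ) :
    v ⬝ᵥ calQ p m β *ᵥ v = nsq (calD p m β) v :=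
  dotProduct_mulVec_self_eq_of_add_transpose calQ_add_transpose v

end BlockMatrices

section Components

variable {p m : ℕ} {n : Fin p → ℕ}

@[simp] lemma uOf_sub (ξ η : (Fin p ⊕ Unit) × Fin m → ℝ) (i : Fin p) :
    uOf (ξ - η) i = uOf ξ i - uOf η i := rfl

@[simp] lemma lamOf_sub (ξ η : (Fin p ⊕ Unit) × Fin m → ℝ) :
    lamOf (ξ - η) = lamOf ξ - lamOf η := rfl

@[simp] lemma uOf_Pmap (A : (i : Fin p) → Matrix (Fin m) (Fin (n i)) ℝ)
    (w : ((i : Fin p) → Fin (n i) → ℝ) × (Fin m → ℝ)) (i : Fin p) :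
    uOf (Pmap A w) i = A i *ᵥ w.1 i := rfl

@[simp] lemma lamOf_Pmap (A : (i : Fin p) → Matrix (Fin m) (Fin (n i)) ℝ)
    (w : ((i : Fin p) → Fin (n i) → ℝ) × (Fin m → ℝ)) :
    lamOf (Pmap A w) = w.2 := rfl

lemma dotProduct_eq_sum_uOf_add_lamOf (ξ η : (Fin p ⊕ Unit) × Fin m → ℝ) :
    ξ ⬝ᵥ η = ∑ i, uOf ξ i ⬝ᵥ uOf η i + lamOf ξ ⬝ᵥ lamOf η := by
  simp [dotProduct, Fintype.sum_prod_type, Fintype.sum_sum_type, uOf, lamOf]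

lemma uOf_calQ_mulVec (β : ℝ) (v : (Fin p ⊕ Unit) × Fin m → ℝ) (i : Fin p) :
    uOf (calQ p m β *ᵥ v) i = β • uOf v i + lamOf v := by
  ext j
  simp [calQ, Q0, mulVec, dotProduct, Fintype.sum_prod_type, Fintype.sum_sum_type, uOf, lamOf,
    Matrix.one_apply]

lemma lamOf_calQ_mulVec (β : ℝ) (v : (Fin p ⊕ Unit) × Fin m → ℝ) :
    lamOf (calQ p m β *ᵥ v) = β⁻¹ • lamOf v - ∑ i, uOf v i := by
  ext j
  simp [calQ, Q0, mulVec, dotProduct, Fintype.sum_prod_type, Fintype.sum_sum_type, uOf, lamOf,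
    Matrix.one_apply, Finset.sum_apply]
  ring

end Components

section FirstOrderOptimality

open Filter Topology in
lemma nonneg_of_forall_mul_add_sq_mul_nonneg {C K : ℝ}
    (h : ∀ t ∈ Set.Ioo (0 : ℝ) 1, 0 ≤ t * C + t ^ 2 * K) : 0 ≤ C := by
  have hlim : Tendsto (fun t => C + t * K) (𝓝[>] 0) (𝓝 C) := by
    have : Continuous fun t : ℝ => C + t * K := by fun_prop
    simpa using (this.tendsto 0).mono_left nhdsWithin_le_nhds
  refine ge_of_tendsto hlim ?_
  filter_upwards [Ioo_mem_nhdsGT (zero_lt_one' ℝ)] with t ht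
  have := h t ht
  nlinarith [ht.1]

lemma ConvexOn.nonneg_of_isMinOn_add {E : Type*} [AddCommGroup E] [Module ℝ E] {S : Set E}
    {f g : E → ℝ} (hf : ConvexOn ℝ S f) {x y : E} (hx : x ∈ S) (hy : y ∈ S)
    (hmin : IsMinOn (f + g) S x) {L K : ℝ}
    (hg : ∀ t : ℝ, g (x + t • (y - x)) = g x + t * L + t ^ 2 * K) :
    0 ≤ f y - f x + L := by
  refine nonneg_of_forall_mul_add_sq_mul_nonneg (K := K) fun t ht => ?_
  have hseg : x + t • (y - x) = (1 - t) • x + t • y := by module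
  have hmem : x + t • (y - x) ∈ S := hseg ▸ hf.1 hx hy (by linarith [ht.2]) ht.1.le (by ring)
  have hconv : f (x + t • (y - x)) ≤ (1 - t) • f x + t • f y :=
    hseg ▸ hf.2 hx hy (by linarith [ht.2]) ht.1.le (by ring)
  have hle : f x + g x ≤ f (x + t • (y - x)) + g (x + t • (y - x)) := hmin hmem
  rw [hg] at hle
  rw [smul_eq_mul, smul_eq_mul] at hconv
  linarith

lemma almSubproblem_optimality {ι κ : Type*} [Fintype ι] [Fintype κ] {f : (κ → ℝ) → ℝ}
    {S : Set (κ → ℝ)} (hf : ConvexOn ℝ S f) (A : Matrix ι κ ℝ) (lam u : ι → ℝ) (β : ℝ)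
    {x y : κ → ℝ} (hx : x ∈ S) (hy : y ∈ S)
    (hmin : ∀ z ∈ S, f x - lam ⬝ᵥ A *ᵥ x + β / 2 * ((A *ᵥ x - u) ⬝ᵥ (A *ᵥ x - u)) ≤
      f z - lam ⬝ᵥ A *ᵥ z + β / 2 * ((A *ᵥ z - u) ⬝ᵥ (A *ᵥ z - u))) :
    0 ≤ f y - f x - (A *ᵥ y - A *ᵥ x) ⬝ᵥ (lam + β • (u - A *ᵥ x)) := by
  set v := A *ᵥ y - A *ᵥ x
  have hfirst := hf.nonneg_of_isMinOn_add (g := fun z => β / 2 * ((A *ᵥ z - u) ⬝ᵥ (A *ᵥ z - u)) -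
      lam ⬝ᵥ A *ᵥ z) hx hy
    (isMinOn_iff.2 fun z hz => by simp only [Pi.add_apply]; linarith [hmin z hz])
    (L := -(v ⬝ᵥ (lam + β • (u - A *ᵥ x)))) (K := β / 2 * (v ⬝ᵥ v)) fun t => by
      simp only [mulVec_add, mulVec_smul, mulVec_sub, add_dotProduct, dotProduct_add, smul_dotProduct, dotProduct_smul, dotProduct_sub,
        sub_dotProduct, smul_eq_mul, v, dotProduct_comm lam, dotProduct_comm (A *ᵥ y) (A *ᵥ x),
        dotProduct_comm u]
      ring
  linarith

end FirstOrderOptimality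

section VariationalInequality

variable {p m : ℕ} {n : Fin p → ℕ} {θ : (i : Fin p) → (Fin (n i) → ℝ) → ℝ}
  {X : (i : Fin p) → Set (Fin (n i) → ℝ)} {A : (i : Fin p) → Matrix (Fin m) (Fin (n i)) ℝ}
  {b : Fin m → ℝ} {β : ℝ}

lemma dotW_sub_Fop_add_dotW_sub_Fop (w w' : ((i : Fin p) → Fin (n i) → ℝ) × (Fin m → ℝ)) :
    dotW (w - w') (Fop A b w') + dotW (w' - w) (Fop A b w) = 0 := by
  simp only [dotW, Fop, Prod.fst_sub, Prod.snd_sub, Pi.sub_apply, dotProduct_neg,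
    dotProduct_transpose_mulVec, mulVec_sub, dotProduct_sub, sub_dotProduct, Finset.sum_sub_distrib,
    Finset.sum_neg_distrib, dotProduct_sum]
  ring

lemma ALMStep.dotProduct_calQ_le (hθ : ∀ i, ConvexOn ℝ (X i) (θ i)) (hβ : β ≠ 0)
    {ξ : (Fin p ⊕ Unit) × Fin m → ℝ} {wt : ((i : Fin p) → Fin (n i) → ℝ) × (Fin m → ℝ)}
    (hstep : ALMStep β θ X A b ξ wt) {w : ((i : Fin p) → Fin (n i) → ℝ) × (Fin m → ℝ)}
    (hw : w ∈ OmegaSet m X) :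
    (Pmap A w - Pmap A wt) ⬝ᵥ calQ p m β *ᵥ (ξ - Pmap A wt) ≤
      thetaSum θ w.1 - thetaSum θ wt.1 + dotW (w - wt) (Fop A b wt) := by
  have hopt : ∀ i, 0 ≤ θ i (w.1 i) - θ i (wt.1 i) -
      (A i *ᵥ w.1 i - A i *ᵥ wt.1 i) ⬝ᵥ (lamOf ξ + β • (uOf ξ i - A i *ᵥ wt.1 i)) := fun i =>
    almSubproblem_optimality (hθ i) (A i) _ _ β (hstep.1 i).1 (hw i) (hstep.1 i).2
  have hu : ∀ i, uOf (calQ p m β *ᵥ (ξ - Pmap A wt)) i =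
      (lamOf ξ + β • (uOf ξ i - A i *ᵥ wt.1 i)) - wt.2 := fun i => by
    rw [uOf_calQ_mulVec]; simp only [uOf_sub, uOf_Pmap, lamOf_sub, lamOf_Pmap]; abel
  have hlam : lamOf (calQ p m β *ᵥ (ξ - Pmap A wt)) = ∑ i, A i *ᵥ wt.1 i - b := by
    rw [lamOf_calQ_mulVec, lamOf_sub, lamOf_Pmap, hstep.2, sub_sub_cancel, inv_smul_smul₀ hβ]
    simp only [uOf_sub, uOf_Pmap, Finset.sum_sub_distrib]
    abel
  have hF : dotW (w - wt) (Fop A b wt) = -∑ i, (A i *ᵥ w.1 i - A i *ᵥ wt.1 i) ⬝ᵥ wt.2 +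
      (w.2 - wt.2) ⬝ᵥ (∑ i, A i *ᵥ wt.1 i - b) := by
    simp only [dotW, Fop, Prod.fst_sub, Prod.snd_sub, Pi.sub_apply, dotProduct_neg,
      dotProduct_transpose_mulVec, ← mulVec_sub, dotProduct_comm _ wt.2, Finset.sum_neg_distrib]
  rw [dotProduct_eq_sum_uOf_add_lamOf, hlam, hF, thetaSum, thetaSum]
  simp only [hu, uOf_sub, uOf_Pmap, lamOf_sub, lamOf_Pmap, dotProduct_sub, Finset.sum_sub_distrib]
  have hsum := Finset.sum_nonneg (s := Finset.univ) fun i _ => hopt i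
  rw [Finset.sum_sub_distrib, Finset.sum_sub_distrib] at hsum
  linarith

lemma ALMStep.dotProduct_calQ_nonneg (hθ : ∀ i, ConvexOn ℝ (X i) (θ i)) (hβ : β ≠ 0)
    {ξ : (Fin p ⊕ Unit) × Fin m → ℝ} {wt ws : ((i : Fin p) → Fin (n i) → ℝ) × (Fin m → ℝ)}
    (hstep : ALMStep β θ X A b ξ wt) (hws : ws ∈ VIsol θ X A b) :
    0 ≤ (Pmap A wt - Pmap A ws) ⬝ᵥ calQ p m β *ᵥ (ξ - Pmap A wt) := by
  have hpred := hstep.dotProduct_calQ_le hθ hβ hws.1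
  have hvi := hws.2 wt fun i => (hstep.1 i).1
  have hskew := dotW_sub_Fop_add_dotW_sub_Fop (A := A) (b := b) ws wt
  rw [← neg_sub, neg_dotProduct]
  linarith

end VariationalInequality

theorem stmt19_general {p m : ℕ} {n : Fin p → ℕ}
    (θ : (i : Fin p) → (Fin (n i) → ℝ) → ℝ) (hθ : ∀ i, ConvexOn ℝ Set.univ (θ i))
    (X : (i : Fin p) → Set (Fin (n i) → ℝ))
    (hXconv : ∀ i, Convex ℝ (X i))
    (A : (i : Fin p) → Matrix (Fin m) (Fin (n i)) ℝ) (b : Fin m → ℝ)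
    {β : ℝ} (hβ : 0 < β) {α : ℝ} (hα : α ∈ Set.Ioo (0 : ℝ) 2)
    (ξk ξk1 : (Fin p ⊕ Unit) × Fin m → ℝ)
    (wt : ((i : Fin p) → Fin (n i) → ℝ) × (Fin m → ℝ))
    (hstep : ALMStep β θ X A b ξk wt)
    (hrel : ξk1 = ξk - α • (calM p m β).mulVec (ξk - Pmap A wt)) :
    nsq (calH p m β) (ξk - ξk1) = α ^ 2 * nsq (calD p m β) (ξk - Pmap A wt) ∧
      ∀ ξs ∈ Pmap A '' VIsol θ X A b,
        nsq (calH p m β) (ξk1 - ξs) ≤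
          nsq (calH p m β) (ξk - ξs) - (2 - α) / α * nsq (calH p m β) (ξk - ξk1) := by
  set d := ξk - Pmap A wt
  have hnorm : nsq (calH p m β) (ξk - ξk1) = α ^ 2 * nsq (calD p m β) d := by
    rw [hrel, sub_sub_cancel, nsq_smul, nsq_calH_calM_mulVec hβ.ne']
  refine ⟨hnorm, ?_⟩
  rintro _ ⟨ws, hws, rfl⟩
  set e := ξk - Pmap A ws
  have hQ : nsq (calD p m β) d ≤ e ⬝ᵥ calQ p m β *ᵥ d := by
    have := hstep.dotProduct_calQ_nonneg (fun i => (hθ i).subset (Set.subset_univ _) (hXconv i))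
      hβ.ne' hws
    rw [← dotProduct_calQ_self, show e = d + (Pmap A wt - Pmap A ws) by simp only [d, e]; abel,
      add_dotProduct]
    linarith
  have hnext : ξk1 - Pmap A ws = e - α • calM p m β *ᵥ d := by rw [hrel]; simp only [e]; abel
  calc nsq (calH p m β) (ξk1 - Pmap A ws)
      = nsq (calH p m β) e - 2 * α * (e ⬝ᵥ calQ p m β *ᵥ d) + α ^ 2 * nsq (calD p m β) d := by
        rw [hnext, nsq_sub_smul calH_transpose, dotProduct_calH_calM_mulVec hβ.ne',
          nsq_calH_calM_mulVec hβ.ne']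
    _ ≤ nsq (calH p m β) e - (2 - α) * α * nsq (calD p m β) d := by
        nlinarith [mul_le_mul_of_nonneg_left hQ hα.1.le]
    _ = nsq (calH p m β) e - (2 - α) / α * nsq (calH p m β) (ξk - ξk1) := by
        rw [hnorm]; field_simp [hα.1.ne']

/-- If `w̃^k` is the output of the parallel splitting ALM step with input `ξ^k` and
`ξ^{k+1} = ξ^k − αℳ(ξ^k − ξ̃^k)` with `α ∈ (0,2)`, then
`‖ξ^k − ξ^{k+1}‖²_ℋ = α²‖ξ^k − ξ̃^k‖²_𝒟` and for every `ξ* ∈ Ξ*`: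
`‖ξ^{k+1} − ξ*‖²_ℋ ≤ ‖ξ^k − ξ*‖²_ℋ − ((2 − α)/α)‖ξ^k − ξ^{k+1}‖²_ℋ`. -/
theorem stmt19 {p m : ℕ} {n : Fin p → ℕ} (hp : 1 ≤ p)
    (θ : (i : Fin p) → (Fin (n i) → ℝ) → ℝ) (hθ : ∀ i, ConvexOn ℝ Set.univ (θ i))
    (X : (i : Fin p) → Set (Fin (n i) → ℝ))
    (hXconv : ∀ i, Convex ℝ (X i)) (hXclosed : ∀ i, IsClosed (X i))
    (hXne : ∀ i, (X i).Nonempty)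
    (A : (i : Fin p) → Matrix (Fin m) (Fin (n i)) ℝ) (b : Fin m → ℝ)
    {β : ℝ} (hβ : 0 < β) {α : ℝ} (hα : α ∈ Set.Ioo (0 : ℝ) 2)
    (ξk ξk1 : (Fin p ⊕ Unit) × Fin m → ℝ)
    (wt : ((i : Fin p) → Fin (n i) → ℝ) × (Fin m → ℝ))
    (hstep : ALMStep β θ X A b ξk wt)
    (hrel : ξk1 = ξk - α • (calM p m β).mulVec (ξk - Pmap A wt)) :
    nsq (calH p m β) (ξk - ξk1) = α ^ 2 * nsq (calD p m β) (ξk - Pmap A wt) ∧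
      ∀ ξs ∈ Pmap A '' VIsol θ X A b,
        nsq (calH p m β) (ξk1 - ξs) ≤
          nsq (calH p m β) (ξk - ξs) - (2 - α) / α * nsq (calH p m β) (ξk - ξk1) :=
  stmt19_general θ hθ X hXconv A b hβ hα ξk ξk1 wt hstep hrel
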